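/- Let α > β ≥ 1, m_1, m_2 ≥ 1, 0 ≤ k ≤ β−1, and F ∈ ℂ^{m_2×m_1}. Set a_n := −(1/2^{2n+1})·(1/(n+1))·binomial(2n,n) for n ≥ 0, and define the (α m_1 + β m_2)×(α m_1 + β m_2) matrix G = [[Δ_{11}, Δ_{12}], [Δ_{21}, Δ_{22}]] as follows: Δ_{11} = T(A_0, …, A_{α−1}) with A_0 = I_{m_1}, A_j = a_{n−1}(FᵀF)^n whenever j = n(2k+α−β) for some integer n ≥ 1, and A_j = 0 otherwise; Δ_{22} = T(D_0, …, D_{β−1}) with D_0 = I_{m_2}, D_j = a_{n−1}(FFᵀ)^n whenever j = n(2k+α−β) for some n ≥ 1, and D_j = 0 otherwise; Δ_{12} is the α×β array of m_1×m_2 blocks with −Fᵀ in block positions (i, i+k) for 1 ≤ i ≤ β−k and zeros elsewhere; Δ_{21} is the β×α array of m_2×m_1 blocks with F in block positions (i, (α−β)+i+k) for 1 ≤ i ≤ β−k and zeros elsewhere. Then, with 𝓕 := E_α(I_{m_1}) ⊕ E_β(I_{m_2}), the matrix G satisfies 𝓕·Gᵀ·𝓕·G = I. -/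

import Mathlib

open Matrix

noncomputable section

/-- Form (0T0): block matrix partitioned by Jordan structure `(α, m)` whose `(r,s)` block,
viewed as an `α r × α s` array of `m r × m s` blocks, is a rectangular block
upper-triangular Toeplitz matrix aligned to the top-right corner. -/
def IsForm0T0 {N : ℕ} (α m : Fin N → ℕ)
    (X : Matrix (Σ r : Fin N, Fin (α r) × Fin (m r)) (Σ r : Fin N, Fin (α r) × Fin (m r)) ℂ) :
    Prop :=
  ∃ A : ∀ r s : Fin N, ℕ → Matrix (Fin (m r)) (Fin (m s)) ℂ,
    ∀ (r s : Fin N) (i : Fin (α r)) (j : Fin (α s)) (a : Fin (m r)) (b : Fin (m s)),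
      X ⟨r, (i, a)⟩ ⟨s, (j, b)⟩ =
        if (i : ℕ) + (α s - min (α r) (α s)) ≤ (j : ℕ) then
          A r s ((j : ℕ) - (i : ℕ) - (α s - min (α r) (α s))) a b
        else 0

/-- `E_b(I_m)`: the `bm × bm` block matrix with `I_m` on the block anti-diagonal. -/
def revE (b m : ℕ) : Matrix (Fin b × Fin m) (Fin b × Fin m) ℂ :=
  Matrix.of fun p q => if (p.1 : ℕ) + (q.1 : ℕ) + 1 = b ∧ p.2 = q.2 then 1 else 0

/-- `F = ⊕_r E_{α r}(I_{m r})`. -/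
def bigF {N : ℕ} (α m : Fin N → ℕ) :
    Matrix (Σ r : Fin N, Fin (α r) × Fin (m r)) (Σ r : Fin N, Fin (α r) × Fin (m r)) ℂ :=
  Matrix.blockDiagonal' fun r => revE (α r) (m r)

/-- The `n × n` upper-triangular Jordan block `J_n(λ)`. -/
def Jmat (n : ℕ) (lam : ℂ) : Matrix (Fin n) (Fin n) ℂ :=
  Matrix.of fun i j => if (j : ℕ) = (i : ℕ) then lam else if (j : ℕ) = (i : ℕ) + 1 then 1 else 0

/-- The `n × n` backward identity matrix `E_n`. -/
def ErevC (n : ℕ) : Matrix (Fin n) (Fin n) ℂ :=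
  Matrix.of fun i j => if (i : ℕ) + (j : ℕ) + 1 = n then 1 else 0

/-- `P_n = (1/√2)(I + i E_n)`. -/
noncomputable def Pmat (n : ℕ) : Matrix (Fin n) (Fin n) ℂ :=
  (Real.sqrt 2 : ℂ)⁻¹ • (1 + Complex.I • ErevC n)

/-- `P_n⁻¹ = (1/√2)(I − i E_n)`. -/
noncomputable def PmatInv (n : ℕ) : Matrix (Fin n) (Fin n) ℂ :=
  (Real.sqrt 2 : ℂ)⁻¹ • (1 - Complex.I • ErevC n)

/-- The symmetric canonical form `K_n(λ) = P_n J_n(λ) P_n⁻¹` of a Jordan block. -/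
noncomputable def Kmat (n : ℕ) (lam : ℂ) : Matrix (Fin n) (Fin n) ℂ :=
  Pmat n * Jmat n lam * PmatInv n

/-- `T(A_0, …)`: the `β × β` block upper-triangular Toeplitz matrix with blocks `A_j`. -/
def blkToeplitz (β p q : ℕ) (A : ℕ → Matrix (Fin p) (Fin q) ℂ) :
    Matrix (Fin β × Fin p) (Fin β × Fin q) ℂ :=
  Matrix.of fun x y =>
    if (x.1 : ℕ) ≤ (y.1 : ℕ) then A ((y.1 : ℕ) - (x.1 : ℕ)) x.2 y.2 else 0

/-- The `(i,i)`-th `m r × m r` entry-block of the `(r,r)` diagonal block of `X`; for a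
matrix of form (0T0) this is the leading Toeplitz coefficient `A^{rr}_0`. -/
def diagLead {N : ℕ} (α m : Fin N → ℕ)
    (X : Matrix (Σ r : Fin N, Fin (α r) × Fin (m r)) (Σ r : Fin N, Fin (α r) × Fin (m r)) ℂ)
    (r : Fin N) (i : Fin (α r)) : Matrix (Fin (m r)) (Fin (m r)) ℂ :=
  Matrix.of fun a b => X ⟨r, (i, a)⟩ ⟨r, (i, b)⟩

/-- The space of skew-symmetric matrices commuting with `S`. -/
def skewCommSubmodule (ι : Type*) [Fintype ι] [DecidableEq ι] (S : Matrix ι ι ℂ) :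
    Submodule ℂ (Matrix ι ι ℂ) where
  carrier := {X | Xᵀ = -X ∧ X * S = S * X}
  add_mem' := by
    rintro a b ⟨ha1, ha2⟩ ⟨hb1, hb2⟩
    refine ⟨?_, ?_⟩
    · rw [Matrix.transpose_add, ha1, hb1, neg_add]
    · rw [add_mul, mul_add, ha2, hb2]
  zero_mem' := by
    refine ⟨?_, ?_⟩
    · simp
    · simp
  smul_mem' := by
    rintro c a ⟨h1, h2⟩
    refine ⟨?_, ?_⟩
    · rw [Matrix.transpose_smul, h1, smul_neg]
    · rw [Matrix.smul_mul, Matrix.mul_smul, h2]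

/-- The isotropy group (as a set) of `S` under orthogonal similarity. -/
def sigmaSet {ι : Type*} [Fintype ι] [DecidableEq ι] (S : Matrix ι ι ℂ) : Set (Matrix ι ι ℂ) :=
  {Q | Qᵀ * Q = 1 ∧ Qᵀ * S * Q = S}

/-- The coefficient sequence `a_n = −(1/2^{2n+1})·(1/(n+1))·C(2n,n)`. -/
def aaSeq (n : ℕ) : ℂ :=
  -(1 / 2 ^ (2 * n + 1)) * (1 / (n + 1)) * (Nat.choose (2 * n) n : ℂ)

/-- Toeplitz coefficients of `Δ_{11}`: `A_0 = I`, `A_j = a_{n−1}(FᵀF)^n` when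
`j = n(2k+α−β)` with `n ≥ 1`, and `A_j = 0` otherwise. -/
def genA (α β k : ℕ) {m₁ m₂ : ℕ} (F : Matrix (Fin m₂) (Fin m₁) ℂ) (j : ℕ) :
    Matrix (Fin m₁) (Fin m₁) ℂ :=
  if j = 0 then 1
  else if (2 * k + α - β) ∣ j then
    aaSeq (j / (2 * k + α - β) - 1) • (Fᵀ * F) ^ (j / (2 * k + α - β))
  else 0

/-- Toeplitz coefficients of `Δ_{22}`: `D_0 = I`, `D_j = a_{n−1}(FFᵀ)^n` when
`j = n(2k+α−β)` with `n ≥ 1`, and `D_j = 0` otherwise. -/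
def genD (α β k : ℕ) {m₁ m₂ : ℕ} (F : Matrix (Fin m₂) (Fin m₁) ℂ) (j : ℕ) :
    Matrix (Fin m₂) (Fin m₂) ℂ :=
  if j = 0 then 1
  else if (2 * k + α - β) ∣ j then
    aaSeq (j / (2 * k + α - β) - 1) • (F * Fᵀ) ^ (j / (2 * k + α - β))
  else 0

/-- `Δ_{12}`: the `α × β` block array with `−Fᵀ` in block positions `(i, i+k)`. -/
def genΔ12 (α β k : ℕ) {m₁ m₂ : ℕ} (F : Matrix (Fin m₂) (Fin m₁) ℂ) :
    Matrix (Fin α × Fin m₁) (Fin β × Fin m₂) ℂ :=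
  Matrix.of fun p q => if (q.1 : ℕ) = (p.1 : ℕ) + k then (-Fᵀ) p.2 q.2 else 0

/-- `Δ_{21}`: the `β × α` block array with `F` in block positions `(i, (α−β)+i+k)`. -/
def genΔ21 (α β k : ℕ) {m₁ m₂ : ℕ} (F : Matrix (Fin m₂) (Fin m₁) ℂ) :
    Matrix (Fin β × Fin m₂) (Fin α × Fin m₁) ℂ :=
  Matrix.of fun p q => if (q.1 : ℕ) = (α - β) + (p.1 : ℕ) + k then F p.2 q.2 else 0


/-! ### Auxiliary development for stmt15 -/

open Finset in
private lemma stmt15_aux_true : True := trivial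

namespace Stmt15Aux

open Finset

/-- unified coefficient sequence: `aa 0 = 1`, `aa (n+1) = aaSeq n`. -/
def aa : ℕ → ℂ
  | 0 => 1
  | n + 1 => aaSeq n

lemma aaSeq_eq (n : ℕ) : aaSeq n = -(catalan n : ℂ) / 2 ^ (2 * n + 1) := by
  have h2 : (2 * n).choose n = (n + 1) * catalan n := by
    rw [succ_mul_catalan_eq_centralBinom]; rfl
  have h : ((2 * n).choose n : ℂ) = ((n : ℂ) + 1) * (catalan n : ℂ) := by
    rw [h2]; push_cast; ring
  have hn : ((n : ℂ) + 1) ≠ 0 := Nat.cast_add_one_ne_zero n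
  rw [aaSeq, h]
  field_simp

lemma catalan_conv (M : ℕ) :
    ∑ n ∈ range (M + 1), (catalan n : ℂ) * (catalan (M - n) : ℂ) = (catalan (M + 1) : ℂ) := by
  rw [catalan_succ]
  push_cast
  rw [Fin.sum_univ_eq_sum_range (fun i => (catalan i : ℂ) * (catalan (M - i) : ℂ)) (M + 1)]

lemma aa_conv (N : ℕ) :
    ∑ n ∈ range (N + 1), aa n * aa (N - n) =
      if N = 0 then 1 else if N = 1 then -1 else 0 := by
  match N with
  | 0 => simp [aa]
  | 1 => norm_num [Finset.sum_range_succ, aa, aaSeq]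
  | (M + 2) =>
    have h0 : ∑ n ∈ range (M + 3), aa n * aa (M + 2 - n)
        = aa 0 * aa (M + 2) + (∑ n ∈ range (M + 1), aa (n + 1) * aa (M + 2 - (n + 1)))
          + aa (M + 2) * aa 0 := by
      rw [Finset.sum_range_succ, Finset.sum_range_succ']
      simp only [Nat.sub_self, Nat.sub_zero]
      ring
    rw [h0]
    have h1 : ∀ n ∈ range (M + 1), aa (n + 1) * aa (M + 2 - (n + 1)) =
        (catalan n : ℂ) * (catalan (M - n)) / 2 ^ (2 * M + 2) := by
      intro n hn
      simp only [Finset.mem_range] at hn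
      have : M + 2 - (n + 1) = (M - n) + 1 := by omega
      rw [this]
      show aaSeq n * aaSeq (M - n) = _
      rw [aaSeq_eq, aaSeq_eq]
      rw [div_mul_div_comm]
      have : (2 : ℂ) ^ (2 * n + 1) * 2 ^ (2 * (M - n) + 1) = 2 ^ (2 * M + 2) := by
        rw [← pow_add]; congr 1; omega
      rw [this]
      ring
    rw [Finset.sum_congr rfl h1, ← Finset.sum_div, catalan_conv]
    have h2 : aa 0 * aa (M + 2) = -(catalan (M + 1) : ℂ) / 2 ^ (2 * M + 3) := by
      show 1 * aaSeq (M + 1) = _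
      rw [one_mul, aaSeq_eq]; congr 2
    have h3 : aa (M + 2) * aa 0 = -(catalan (M + 1) : ℂ) / 2 ^ (2 * M + 3) := by
      show aaSeq (M + 1) * 1 = _
      rw [mul_one, aaSeq_eq]; congr 2
    rw [h2, h3]
    have h4 : (2 : ℂ) ^ (2 * M + 3) = 2 * 2 ^ (2 * M + 2) := by rw [← pow_succ']
    rw [h4, if_neg (by omega : ¬ M + 2 = 0), if_neg (by omega : ¬ M + 2 = 1)]
    have hz : (2 : ℂ) ^ (2 * M + 2) ≠ 0 := pow_ne_zero _ two_ne_zero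
    field_simp
    ring

/-- coefficient matrices of the diagonal Toeplitz blocks, in unified form. -/
def coefM (c : ℕ) {n : ℕ} (X : Matrix (Fin n) (Fin n) ℂ) (u : ℕ) : Matrix (Fin n) (Fin n) ℂ :=
  if c ∣ u then aa (u / c) • X ^ (u / c) else 0

lemma coefM_mul_apply (c : ℕ) (hc : 0 < c) {n : ℕ} (X : Matrix (Fin n) (Fin n) ℂ) (x : ℕ) :
    coefM c X (c * x) = aa x • X ^ x := by
  rw [coefM, if_pos (Dvd.intro x rfl), Nat.mul_div_cancel_left x hc]

lemma conv_range {n : ℕ} (c : ℕ) (hc : 1 ≤ c) (X : Matrix (Fin n) (Fin n) ℂ) (d : ℕ) :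
    ∑ t ∈ range (d + 1), coefM c X t * coefM c X (d - t)
      = if d = 0 then 1 else if d = c then -X else 0 := by
  by_cases hdvd : c ∣ d
  · obtain ⟨N, rfl⟩ := hdvd
    have hsub : (range (N + 1)).image (fun x => c * x) ⊆ range (c * N + 1) := by
      intro t ht
      simp only [Finset.mem_image, Finset.mem_range] at ht ⊢
      obtain ⟨x, hx, rfl⟩ := ht
      have : c * x ≤ c * N := Nat.mul_le_mul_left c (by omega)
      omega
    have hout : ∀ t ∈ range (c * N + 1), t ∉ (range (N + 1)).image (fun x => c * x) →
        coefM c X t * coefM c X (c * N - t) = 0 := by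
      intro t ht hnt
      have : ¬ c ∣ t := by
        rintro ⟨x, rfl⟩
        apply hnt
        simp only [Finset.mem_range] at ht
        simp only [Finset.mem_image, Finset.mem_range]
        exact ⟨x, by nlinarith, rfl⟩
      rw [coefM, if_neg this, zero_mul]
    rw [← Finset.sum_subset hsub hout, Finset.sum_image
      (fun x _ y _ h => Nat.eq_of_mul_eq_mul_left (by omega) h)]
    have hterm : ∀ x ∈ range (N + 1), coefM c X (c * x) * coefM c X (c * N - c * x)
        = (aa x * aa (N - x)) • X ^ N := by
      intro x hx
      simp only [Finset.mem_range] at hx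
      rw [← Nat.mul_sub, coefM_mul_apply c hc, coefM_mul_apply c hc,
        smul_mul_smul_comm, ← pow_add]
      congr 2
      omega
    rw [Finset.sum_congr rfl hterm, ← Finset.sum_smul, aa_conv]
    rcases N with _ | _ | N
    · simp
    · rw [if_neg (by omega), if_neg (by omega : ¬ c * 1 = 0), if_pos (by omega),
        if_pos (Nat.mul_one c)]
      simp
    · rw [if_neg (by omega), if_neg (by omega), if_neg (by simp; omega), if_neg ?_]
      · simp
      · intro h
        have := Nat.eq_of_mul_eq_mul_left (show 0 < c by omega) (h.trans (Nat.mul_one c).symm)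
        omega
  · have hz : ∀ t ∈ range (d + 1), coefM c X t * coefM c X (d - t) = 0 := by
      intro t ht
      simp only [Finset.mem_range] at ht
      by_cases h1 : c ∣ t
      · have h2 : ¬ c ∣ (d - t) := by
          intro h2
          have hdt : d = t + (d - t) := by omega
          exact hdvd (hdt ▸ Nat.dvd_add h1 h2)
        rw [show coefM c X t * coefM c X (d - t)
            = coefM c X t * (if c ∣ (d - t) then aa ((d - t) / c) • X ^ ((d - t) / c) else 0)
            from rfl, if_neg h2, mul_zero]
      · rw [coefM, if_neg h1, zero_mul]
    rw [Finset.sum_eq_zero hz, if_neg (show ¬ d = 0 from fun h => hdvd (h ▸ dvd_zero c)),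
      if_neg (show ¬ d = c from fun h => hdvd (h ▸ dvd_refl c))]

lemma conv_fin {n : ℕ} (c : ℕ) (hc : 1 ≤ c) (X : Matrix (Fin n) (Fin n) ℂ) {γ : ℕ}
    (i j : Fin γ) :
    ∑ l : Fin γ, ((if (i : ℕ) ≤ (l : ℕ) then coefM c X ((l : ℕ) - (i : ℕ)) else 0) *
        (if (l : ℕ) ≤ (j : ℕ) then coefM c X ((j : ℕ) - (l : ℕ)) else 0))
      = if (j : ℕ) = (i : ℕ) then 1 else if (j : ℕ) = (i : ℕ) + c then -X else 0 := by
  have hj : (j : ℕ) < γ := j.isLt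
  have hi : (i : ℕ) < γ := i.isLt
  rw [Fin.sum_univ_eq_sum_range
    (fun t => (if (i : ℕ) ≤ t then coefM c X (t - (i : ℕ)) else 0) *
        (if t ≤ (j : ℕ) then coefM c X ((j : ℕ) - t) else 0)) γ]
  by_cases hij : (i : ℕ) ≤ (j : ℕ)
  · have hstep1 : ∑ t ∈ range γ,
        ((if (i : ℕ) ≤ t then coefM c X (t - (i : ℕ)) else 0) *
          (if t ≤ (j : ℕ) then coefM c X ((j : ℕ) - t) else 0))
        = ∑ t ∈ range ((j : ℕ) + 1),
        ((if (i : ℕ) ≤ t then coefM c X (t - (i : ℕ)) else 0) *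
          (if t ≤ (j : ℕ) then coefM c X ((j : ℕ) - t) else 0)) := by
      refine (Finset.sum_subset (Finset.range_subset_range.mpr (by omega : (j : ℕ) + 1 ≤ γ)) ?_).symm
      intro t ht hnt
      simp only [Finset.mem_range] at ht hnt
      rw [if_neg (by omega : ¬ t ≤ (j : ℕ)), mul_zero]
    have hstep2 : ∑ t ∈ range ((j : ℕ) + 1),
        ((if (i : ℕ) ≤ t then coefM c X (t - (i : ℕ)) else 0) *
          (if t ≤ (j : ℕ) then coefM c X ((j : ℕ) - t) else 0))
        = ∑ t ∈ Ico 0 (i : ℕ),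
        ((if (i : ℕ) ≤ t then coefM c X (t - (i : ℕ)) else 0) *
          (if t ≤ (j : ℕ) then coefM c X ((j : ℕ) - t) else 0))
        + ∑ t ∈ Ico (i : ℕ) ((j : ℕ) + 1),
        ((if (i : ℕ) ≤ t then coefM c X (t - (i : ℕ)) else 0) *
          (if t ≤ (j : ℕ) then coefM c X ((j : ℕ) - t) else 0)) := by
      rw [Finset.sum_Ico_consecutive _ (Nat.zero_le _) (by omega), ← Finset.range_eq_Ico]
    have hzero : ∑ t ∈ Ico 0 (i : ℕ),
        ((if (i : ℕ) ≤ t then coefM c X (t - (i : ℕ)) else 0) *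
          (if t ≤ (j : ℕ) then coefM c X ((j : ℕ) - t) else 0)) = 0 :=
      Finset.sum_eq_zero (fun t ht => by
        simp only [Finset.mem_Ico] at ht
        rw [if_neg (by omega : ¬ (i : ℕ) ≤ t), zero_mul])
    have hstep3 : ∑ t ∈ Ico (i : ℕ) ((j : ℕ) + 1),
        ((if (i : ℕ) ≤ t then coefM c X (t - (i : ℕ)) else 0) *
          (if t ≤ (j : ℕ) then coefM c X ((j : ℕ) - t) else 0))
        = ∑ s ∈ range (((j : ℕ) - (i : ℕ)) + 1),
            coefM c X s * coefM c X (((j : ℕ) - (i : ℕ)) - s) := by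
      rw [Finset.sum_Ico_eq_sum_range]
      refine Finset.sum_congr (by congr 1; omega) (fun s hs => ?_)
      simp only [Finset.mem_range] at hs
      rw [if_pos (by omega), if_pos (by omega),
        (by omega : (i : ℕ) + s - (i : ℕ) = s),
        (by omega : (j : ℕ) - ((i : ℕ) + s) = ((j : ℕ) - (i : ℕ)) - s)]
    rw [hstep1, hstep2, hzero, hstep3, zero_add, conv_range c hc X]
    by_cases h0 : (j : ℕ) = (i : ℕ)
    · rw [if_pos (by omega : (j : ℕ) - (i : ℕ) = 0), if_pos h0]
    · rw [if_neg (by omega : ¬ (j : ℕ) - (i : ℕ) = 0), if_neg h0]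
      by_cases h1 : (j : ℕ) = (i : ℕ) + c
      · rw [if_pos (by omega), if_pos h1]
      · rw [if_neg (by omega), if_neg h1]
  · rw [Finset.sum_eq_zero (fun t ht => ?_), if_neg (by omega), if_neg (by omega)]
    by_cases h1 : (i : ℕ) ≤ t
    · rw [if_neg (by simp only [Finset.mem_range] at ht; omega : ¬ t ≤ (j : ℕ)), mul_zero]
    · rw [if_neg h1, zero_mul]

end Stmt15Aux


namespace Stmt15Aux

lemma revE_mul {b m : ℕ} {κ : Type*} [Fintype κ] (X : Matrix (Fin b × Fin m) κ ℂ)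
    (p : Fin b × Fin m) (q : κ) :
    (revE b m * X) p q = X (p.1.rev, p.2) q := by
  have hp : (p.1 : ℕ) < b := p.1.isLt
  rw [Matrix.mul_apply, Fintype.sum_eq_single ((p.1.rev, p.2) : Fin b × Fin m) ?_]
  · rw [revE, Matrix.of_apply, if_pos ⟨by rw [Fin.val_rev]; omega, rfl⟩, one_mul]
  · intro x hx
    rw [revE, Matrix.of_apply, if_neg, zero_mul]
    rintro ⟨h1, h2⟩
    apply hx
    have : (x.1 : ℕ) = (p.1.rev : ℕ) := by rw [Fin.val_rev]; omega
    exact Prod.ext (Fin.ext this) h2.symm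

lemma mul_revE {b m : ℕ} {κ : Type*} [Fintype κ] (X : Matrix κ (Fin b × Fin m) ℂ)
    (p : κ) (q : Fin b × Fin m) :
    (X * revE b m) p q = X p (q.1.rev, q.2) := by
  have hq : (q.1 : ℕ) < b := q.1.isLt
  rw [Matrix.mul_apply, Fintype.sum_eq_single ((q.1.rev, q.2) : Fin b × Fin m) ?_]
  · rw [revE, Matrix.of_apply, if_pos ⟨by rw [Fin.val_rev]; omega, rfl⟩, mul_one]
  · intro x hx
    rw [revE, Matrix.of_apply, if_neg, mul_zero]
    rintro ⟨h1, h2⟩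
    apply hx
    have : (x.1 : ℕ) = (q.1.rev : ℕ) := by rw [Fin.val_rev]; omega
    exact Prod.ext (Fin.ext this) h2

lemma flip_toeplitz {γ p : ℕ} (A : ℕ → Matrix (Fin p) (Fin p) ℂ) :
    revE γ p * (blkToeplitz γ p p A)ᵀ * revE γ p
      = blkToeplitz γ p p (fun j => (A j)ᵀ) := by
  ext ⟨i, a⟩ ⟨j, b⟩
  have hi : (i : ℕ) < γ := i.isLt
  have hj : (j : ℕ) < γ := j.isLt
  rw [mul_revE, revE_mul, Matrix.transpose_apply]
  simp only [blkToeplitz, Matrix.of_apply, Fin.val_rev, Matrix.transpose_apply]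
  by_cases h : (i : ℕ) ≤ (j : ℕ)
  · rw [if_pos (by omega), if_pos h,
      (by omega : γ - ((i : ℕ) + 1) - (γ - ((j : ℕ) + 1)) = (j : ℕ) - (i : ℕ))]
  · rw [if_neg (by omega), if_neg h]

lemma flip_d21 {α β k m₁ m₂ : ℕ} (hαβ : β ≤ α) (F : Matrix (Fin m₂) (Fin m₁) ℂ) :
    revE α m₁ * (genΔ21 α β k F)ᵀ * revE β m₂ = -(genΔ12 α β k F) := by
  ext ⟨i, a⟩ ⟨j, b⟩
  have hi : (i : ℕ) < α := i.isLt
  have hj : (j : ℕ) < β := j.isLt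
  rw [mul_revE, revE_mul, Matrix.transpose_apply]
  simp only [genΔ21, genΔ12, Matrix.of_apply, Fin.val_rev, Matrix.neg_apply,
    Matrix.transpose_apply]
  by_cases h : (j : ℕ) = (i : ℕ) + k
  · rw [if_pos (by omega), if_pos h]
    try simp [Matrix.transpose_apply]
  · rw [if_neg (by omega), if_neg h, neg_zero]

lemma flip_d12 {α β k m₁ m₂ : ℕ} (hαβ : β ≤ α) (F : Matrix (Fin m₂) (Fin m₁) ℂ) :
    revE β m₂ * (genΔ12 α β k F)ᵀ * revE α m₁ = -(genΔ21 α β k F) := by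
  ext ⟨i, a⟩ ⟨j, b⟩
  have hi : (i : ℕ) < β := i.isLt
  have hj : (j : ℕ) < α := j.isLt
  rw [mul_revE, revE_mul, Matrix.transpose_apply]
  simp only [genΔ21, genΔ12, Matrix.of_apply, Fin.val_rev, Matrix.neg_apply,
    Matrix.transpose_apply]
  by_cases h : (j : ℕ) = (α - β) + (i : ℕ) + k
  · rw [if_pos (by omega), if_pos h]
    try simp [Matrix.transpose_apply]
  · rw [if_neg (by omega), if_neg h, neg_zero]

lemma genA_transpose (α β k : ℕ) {m₁ m₂ : ℕ} (F : Matrix (Fin m₂) (Fin m₁) ℂ) (j : ℕ) :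
    (genA α β k F j)ᵀ = genA α β k F j := by
  rw [genA]
  split_ifs with h1 h2
  · exact Matrix.transpose_one
  · rw [Matrix.transpose_smul, Matrix.transpose_pow, Matrix.transpose_mul,
      Matrix.transpose_transpose]
  · exact Matrix.transpose_zero

lemma genD_transpose (α β k : ℕ) {m₁ m₂ : ℕ} (F : Matrix (Fin m₂) (Fin m₁) ℂ) (j : ℕ) :
    (genD α β k F j)ᵀ = genD α β k F j := by
  rw [genD]
  split_ifs with h1 h2
  · exact Matrix.transpose_one
  · rw [Matrix.transpose_smul, Matrix.transpose_pow, Matrix.transpose_mul,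
      Matrix.transpose_transpose]
  · exact Matrix.transpose_zero

lemma genA_coef (α β k : ℕ) (hc : 1 ≤ 2 * k + α - β) {m₁ m₂ : ℕ}
    (F : Matrix (Fin m₂) (Fin m₁) ℂ) :
    genA α β k F = coefM (2 * k + α - β) (Fᵀ * F) := by
  funext j
  set c := 2 * k + α - β with hcdef
  rw [genA, coefM]
  by_cases h0 : j = 0
  · subst h0
    rw [if_pos rfl, if_pos (dvd_zero c), Nat.zero_div]
    show (1 : Matrix (Fin m₁) (Fin m₁) ℂ) = aa 0 • (Fᵀ * F) ^ 0
    rw [pow_zero]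
    show (1 : Matrix (Fin m₁) (Fin m₁) ℂ) = (1 : ℂ) • 1
    rw [one_smul]
  · rw [if_neg h0]
    by_cases hd : c ∣ j
    · rw [if_pos hd, if_pos hd]
      have h1 : 1 ≤ j / c := Nat.one_le_div_iff (by omega) |>.mpr
        (Nat.le_of_dvd (Nat.pos_of_ne_zero h0) hd)
      obtain ⟨w, hw⟩ := Nat.exists_eq_add_of_le h1
      rw [hw]
      show aaSeq (1 + w - 1) • (Fᵀ * F) ^ (1 + w) = aa (1 + w) • (Fᵀ * F) ^ (1 + w)
      rw [(by omega : 1 + w - 1 = w), (by omega : 1 + w = w + 1)]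
      rfl
    · rw [if_neg hd, if_neg hd]

lemma genD_coef (α β k : ℕ) (hc : 1 ≤ 2 * k + α - β) {m₁ m₂ : ℕ}
    (F : Matrix (Fin m₂) (Fin m₁) ℂ) :
    genD α β k F = coefM (2 * k + α - β) (F * Fᵀ) := by
  funext j
  set c := 2 * k + α - β with hcdef
  rw [genD, coefM]
  by_cases h0 : j = 0
  · subst h0
    rw [if_pos rfl, if_pos (dvd_zero c), Nat.zero_div]
    show (1 : Matrix (Fin m₂) (Fin m₂) ℂ) = aa 0 • (F * Fᵀ) ^ 0
    rw [pow_zero]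
    show (1 : Matrix (Fin m₂) (Fin m₂) ℂ) = (1 : ℂ) • 1
    rw [one_smul]
  · rw [if_neg h0]
    by_cases hd : c ∣ j
    · rw [if_pos hd, if_pos hd]
      have h1 : 1 ≤ j / c := Nat.one_le_div_iff (by omega) |>.mpr
        (Nat.le_of_dvd (Nat.pos_of_ne_zero h0) hd)
      obtain ⟨w, hw⟩ := Nat.exists_eq_add_of_le h1
      rw [hw]
      show aaSeq (1 + w - 1) • (F * Fᵀ) ^ (1 + w) = aa (1 + w) • (F * Fᵀ) ^ (1 + w)
      rw [(by omega : 1 + w - 1 = w), (by omega : 1 + w = w + 1)]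
      rfl
    · rw [if_neg hd, if_neg hd]

lemma pow_intertw {m₁ m₂ : ℕ} (F : Matrix (Fin m₂) (Fin m₁) ℂ) (n : ℕ) :
    (Fᵀ * F) ^ n * Fᵀ = Fᵀ * (F * Fᵀ) ^ n := by
  induction n with
  | zero => simp
  | succ n ih =>
    rw [pow_succ', Matrix.mul_assoc, ih, pow_succ']
    simp only [Matrix.mul_assoc]

lemma pow_intertw' {m₁ m₂ : ℕ} (F : Matrix (Fin m₂) (Fin m₁) ℂ) (n : ℕ) :
    (F * Fᵀ) ^ n * F = F * (Fᵀ * F) ^ n := by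
  induction n with
  | zero => simp
  | succ n ih =>
    rw [pow_succ', Matrix.mul_assoc, ih, pow_succ']
    simp only [Matrix.mul_assoc]

lemma coef_intertw (c : ℕ) {m₁ m₂ : ℕ} (F : Matrix (Fin m₂) (Fin m₁) ℂ) (u : ℕ) :
    coefM c (Fᵀ * F) u * Fᵀ = Fᵀ * coefM c (F * Fᵀ) u := by
  rw [coefM, coefM]
  split_ifs with h
  · rw [Matrix.smul_mul, Matrix.mul_smul, pow_intertw]
  · rw [Matrix.zero_mul, Matrix.mul_zero]

lemma coef_intertw' (c : ℕ) {m₁ m₂ : ℕ} (F : Matrix (Fin m₂) (Fin m₁) ℂ) (u : ℕ) :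
    coefM c (F * Fᵀ) u * F = F * coefM c (Fᵀ * F) u := by
  rw [coefM, coefM]
  split_ifs with h
  · rw [Matrix.smul_mul, Matrix.mul_smul, pow_intertw']
  · rw [Matrix.zero_mul, Matrix.mul_zero]

lemma sum_ite_mul_ite {ι : Type*} [Fintype ι] (P Q : Prop) [Decidable P] [Decidable Q]
    (f g : ι → ℂ) :
    ∑ x, (if P then f x else 0) * (if Q then g x else 0)
      = if P ∧ Q then ∑ x, f x * g x else 0 := by
  by_cases hP : P <;> by_cases hQ : Q <;> simp [hP, hQ]

lemma ite_and_entry {n : ℕ} (P Q : Prop) [Decidable P] [Decidable Q]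
    (M N : Matrix (Fin n) (Fin n) ℂ) (a b : Fin n) :
    (if P ∧ Q then (M * N) a b else 0)
      = ((if P then M else 0) * (if Q then N else 0)) a b := by
  by_cases hP : P <;> by_cases hQ : Q <;> simp [hP, hQ]

lemma fin_sum_eq_single {M : Type*} [AddCommMonoid M] {γ : ℕ} (g : Fin γ → M) (e : ℕ)
    (he : e < γ) (h : ∀ l : Fin γ, (l : ℕ) ≠ e → g l = 0) :
    ∑ l, g l = g ⟨e, he⟩ :=
  Fintype.sum_eq_single ⟨e, he⟩ (fun x hx => h x (fun hv => hx (Fin.ext hv)))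

end Stmt15Aux


namespace Stmt15Aux

lemma d12_apply {α β k m₁ m₂ : ℕ} (F : Matrix (Fin m₂) (Fin m₁) ℂ)
    (p : Fin α × Fin m₁) (q : Fin β × Fin m₂) :
    genΔ12 α β k F p q = if (q.1 : ℕ) = (p.1 : ℕ) + k then -(Fᵀ p.2 q.2) else 0 := by
  rw [genΔ12, Matrix.of_apply]
  split_ifs
  · rw [Matrix.neg_apply]
  · rfl

lemma d21_apply {α β k m₁ m₂ : ℕ} (F : Matrix (Fin m₂) (Fin m₁) ℂ)
    (p : Fin β × Fin m₂) (q : Fin α × Fin m₁) :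
    genΔ21 α β k F p q = if (q.1 : ℕ) = (α - β) + (p.1 : ℕ) + k then F p.2 q.2 else 0 := rfl

lemma neg_d12_apply {α β k m₁ m₂ : ℕ} (F : Matrix (Fin m₂) (Fin m₁) ℂ)
    (p : Fin α × Fin m₁) (q : Fin β × Fin m₂) :
    (-(genΔ12 α β k F)) p q = if (q.1 : ℕ) = (p.1 : ℕ) + k then Fᵀ p.2 q.2 else 0 := by
  rw [Matrix.neg_apply, d12_apply]
  split_ifs
  · rw [neg_neg]
  · rw [neg_zero]

lemma neg_d21_apply {α β k m₁ m₂ : ℕ} (F : Matrix (Fin m₂) (Fin m₁) ℂ)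
    (p : Fin β × Fin m₂) (q : Fin α × Fin m₁) :
    (-(genΔ21 α β k F)) p q
      = if (q.1 : ℕ) = (α - β) + (p.1 : ℕ) + k then -(F p.2 q.2) else 0 := by
  rw [Matrix.neg_apply, d21_apply]
  split_ifs
  · rfl
  · rw [neg_zero]

lemma blkT_apply {γ p q : ℕ} (A : ℕ → Matrix (Fin p) (Fin q) ℂ)
    (x : Fin γ × Fin p) (y : Fin γ × Fin q) :
    blkToeplitz γ p q A x y
      = if (x.1 : ℕ) ≤ (y.1 : ℕ) then A ((y.1 : ℕ) - (x.1 : ℕ)) x.2 y.2 else 0 := rfl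

lemma sum_ite_of_unique {M : Type*} [AddCommMonoid M] {γ : ℕ} (P : Fin γ → Prop)
    [DecidablePred P] (f : Fin γ → M) (e : ℕ) (he : e < γ)
    (huniq : ∀ l, P l → (l : ℕ) = e) :
    ∑ l, (if P l then f l else 0) = if P ⟨e, he⟩ then f ⟨e, he⟩ else 0 := by
  refine Fintype.sum_eq_single ((⟨e, he⟩ : Fin γ)) (fun x hx => ?_)
  rw [if_neg (fun hP => hx (Fin.ext ((huniq x hP).trans (Fin.val_mk he).symm)))]

lemma blockE2 {α β k m₁ m₂ : ℕ} (hαβ : β < α) (F : Matrix (Fin m₂) (Fin m₁) ℂ) :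
    blkToeplitz α m₁ m₁ (genA α β k F) * genΔ12 α β k F
      + (-(genΔ12 α β k F)) * blkToeplitz β m₂ m₂ (genD α β k F) = 0 := by
  set c := 2 * k + α - β with hcdef
  have hc : 1 ≤ c := by omega
  rw [genA_coef α β k hc F, genD_coef α β k hc F, ← hcdef]
  ext ⟨i, a⟩ ⟨j, b⟩
  have hi : (i : ℕ) < α := i.isLt
  have hj : (j : ℕ) < β := j.isLt
  rw [Matrix.add_apply, Matrix.zero_apply, Matrix.mul_apply, Matrix.mul_apply,
    Fintype.sum_prod_type, Fintype.sum_prod_type]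
  simp only [blkT_apply, d12_apply, neg_d12_apply]
  simp only [sum_ite_mul_ite]
  by_cases hcond : (i : ℕ) + k ≤ (j : ℕ)
  · rw [sum_ite_of_unique (fun l => (i : ℕ) ≤ (l : ℕ) ∧ (j : ℕ) = (l : ℕ) + k) _
      ((j : ℕ) - k) (by omega) (fun l hl => by omega)]
    rw [sum_ite_of_unique (fun l => (l : ℕ) = (i : ℕ) + k ∧ (l : ℕ) ≤ (j : ℕ)) _
      ((i : ℕ) + k) (by omega) (fun l hl => by omega)]
    rw [if_pos (show (i : ℕ) ≤ (j : ℕ) - k ∧ (j : ℕ) = ((j : ℕ) - k) + k from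
      ⟨by omega, by omega⟩)]
    rw [if_pos (show (i : ℕ) + k = (i : ℕ) + k ∧ (i : ℕ) + k ≤ (j : ℕ) from ⟨rfl, hcond⟩)]
    simp only [Fin.val_mk, mul_neg]
    rw [Finset.sum_neg_distrib, ← Matrix.mul_apply, ← Matrix.mul_apply,
      (show (j : ℕ) - ((i : ℕ) + k) = (j : ℕ) - k - (i : ℕ) by omega),
      coef_intertw, neg_add_cancel]
  · rw [Finset.sum_eq_zero (fun l _ => by rw [if_neg]; rintro ⟨h1, h2⟩; omega),
      Finset.sum_eq_zero (fun l _ => by rw [if_neg]; rintro ⟨h1, h2⟩; omega), add_zero]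

end Stmt15Aux


namespace Stmt15Aux

lemma ite_apply_mat {ι κ : Type*} (P : Prop) [Decidable P] (M N : Matrix ι κ ℂ) (a : ι)
    (b : κ) : (if P then M else N) a b = if P then M a b else N a b := by
  split_ifs <;> rfl

lemma blockE3 {α β k m₁ m₂ : ℕ} (hαβ : β < α) (F : Matrix (Fin m₂) (Fin m₁) ℂ) :
    (-(genΔ21 α β k F)) * blkToeplitz α m₁ m₁ (genA α β k F)
      + blkToeplitz β m₂ m₂ (genD α β k F) * genΔ21 α β k F = 0 := by
  set c := 2 * k + α - β with hcdef
  have hc : 1 ≤ c := by omega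
  rw [genA_coef α β k hc F, genD_coef α β k hc F, ← hcdef]
  ext ⟨i, a⟩ ⟨j, b⟩
  have hi : (i : ℕ) < β := i.isLt
  have hj : (j : ℕ) < α := j.isLt
  rw [Matrix.add_apply, Matrix.zero_apply, Matrix.mul_apply, Matrix.mul_apply,
    Fintype.sum_prod_type, Fintype.sum_prod_type]
  simp only [blkT_apply, d21_apply, neg_d21_apply]
  simp only [sum_ite_mul_ite]
  by_cases hcond : (α - β) + (i : ℕ) + k ≤ (j : ℕ)
  · rw [sum_ite_of_unique (fun l => (l : ℕ) = (α - β) + (i : ℕ) + k ∧ (l : ℕ) ≤ (j : ℕ)) _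
      ((α - β) + (i : ℕ) + k) (by omega) (fun l hl => hl.1)]
    rw [sum_ite_of_unique (fun l => (i : ℕ) ≤ (l : ℕ) ∧ (j : ℕ) = (α - β) + (l : ℕ) + k) _
      ((j : ℕ) - (α - β) - k) (by omega) (fun l hl => by omega)]
    rw [if_pos (show (α - β) + (i : ℕ) + k = (α - β) + (i : ℕ) + k
        ∧ (α - β) + (i : ℕ) + k ≤ (j : ℕ) from ⟨rfl, hcond⟩)]
    rw [if_pos (show (i : ℕ) ≤ (j : ℕ) - (α - β) - k
        ∧ (j : ℕ) = (α - β) + ((j : ℕ) - (α - β) - k) + k from ⟨by omega, by omega⟩)]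
    simp only [Fin.val_mk, neg_mul]
    rw [Finset.sum_neg_distrib, ← Matrix.mul_apply, ← Matrix.mul_apply,
      (show (j : ℕ) - (α - β) - k - (i : ℕ) = (j : ℕ) - ((α - β) + (i : ℕ) + k) by omega),
      coef_intertw', neg_add_cancel]
  · rw [Finset.sum_eq_zero (fun l _ => by rw [if_neg]; rintro ⟨h1, h2⟩; omega),
      Finset.sum_eq_zero (fun l _ => by rw [if_neg]; rintro ⟨h1, h2⟩; omega), add_zero]

lemma blockE1 {α β k m₁ m₂ : ℕ} (hαβ : β < α) (F : Matrix (Fin m₂) (Fin m₁) ℂ) :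
    blkToeplitz α m₁ m₁ (genA α β k F) * blkToeplitz α m₁ m₁ (genA α β k F)
      + (-(genΔ12 α β k F)) * genΔ21 α β k F = 1 := by
  set c := 2 * k + α - β with hcdef
  have hc : 1 ≤ c := by omega
  rw [genA_coef α β k hc F, ← hcdef]
  ext ⟨i, a⟩ ⟨j, b⟩
  have hi : (i : ℕ) < α := i.isLt
  have hj : (j : ℕ) < α := j.isLt
  rw [Matrix.add_apply, Matrix.mul_apply, Matrix.mul_apply,
    Fintype.sum_prod_type, Fintype.sum_prod_type]
  simp only [blkT_apply, d21_apply, neg_d12_apply]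
  simp only [sum_ite_mul_ite]
  simp only [← Matrix.mul_apply]
  have hterm1 : ∑ l : Fin α, (if (i : ℕ) ≤ (l : ℕ) ∧ (l : ℕ) ≤ (j : ℕ) then
        (coefM c (Fᵀ * F) ((l : ℕ) - (i : ℕ)) * coefM c (Fᵀ * F) ((j : ℕ) - (l : ℕ))) a b
      else 0)
      = (if (j : ℕ) = (i : ℕ) then (1 : Matrix (Fin m₁) (Fin m₁) ℂ)
          else if (j : ℕ) = (i : ℕ) + c then -(Fᵀ * F) else 0) a b := by
    simp only [ite_and_entry]
    rw [← Matrix.sum_apply, conv_fin c hc (Fᵀ * F) i j]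
  rw [hterm1]
  simp only [ite_apply_mat]
  by_cases hj0 : (j : ℕ) = (i : ℕ)
  · have hij : i = j := Fin.ext hj0.symm
    subst hij
    rw [if_pos hj0]
    rw [Finset.sum_eq_zero (fun l _ => by rw [if_neg]; rintro ⟨h1, h2⟩; omega), add_zero]
    simp [Matrix.one_apply, Prod.ext_iff]
  · rw [if_neg hj0]
    by_cases hjc : (j : ℕ) = (i : ℕ) + c
    · rw [if_pos hjc]
      rw [sum_ite_of_unique (fun l => (l : ℕ) = (i : ℕ) + k
          ∧ (j : ℕ) = (α - β) + (l : ℕ) + k) _ ((i : ℕ) + k) (by omega) (fun l hl => hl.1)]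
      rw [if_pos (show (i : ℕ) + k = (i : ℕ) + k
          ∧ (j : ℕ) = (α - β) + ((⟨(i : ℕ) + k, by omega⟩ : Fin β) : ℕ) + k from
          ⟨rfl, by simp only [Fin.val_mk]; omega⟩)]
      rw [Matrix.one_apply, if_neg (show ¬ ((i, a) = (j, b)) from by
        rintro h; rw [Prod.mk.injEq] at h; exact hj0 (by rw [h.1]))]
      rw [Matrix.neg_apply]
      ring
    · rw [if_neg hjc]
      rw [Finset.sum_eq_zero (fun l _ => by rw [if_neg]; rintro ⟨h1, h2⟩; omega), add_zero]
      rw [Matrix.one_apply, if_neg (show ¬ ((i, a) = (j, b)) from by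
        rintro h; rw [Prod.mk.injEq] at h; exact hj0 (by rw [h.1])), Matrix.zero_apply]

lemma blockE4 {α β k m₁ m₂ : ℕ} (hαβ : β < α) (F : Matrix (Fin m₂) (Fin m₁) ℂ) :
    (-(genΔ21 α β k F)) * genΔ12 α β k F
      + blkToeplitz β m₂ m₂ (genD α β k F) * blkToeplitz β m₂ m₂ (genD α β k F) = 1 := by
  set c := 2 * k + α - β with hcdef
  have hc : 1 ≤ c := by omega
  rw [genD_coef α β k hc F, ← hcdef]
  ext ⟨i, a⟩ ⟨j, b⟩
  have hi : (i : ℕ) < β := i.isLt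
  have hj : (j : ℕ) < β := j.isLt
  rw [Matrix.add_apply, Matrix.mul_apply, Matrix.mul_apply,
    Fintype.sum_prod_type, Fintype.sum_prod_type]
  simp only [blkT_apply, d12_apply, neg_d21_apply]
  simp only [sum_ite_mul_ite]
  simp only [neg_mul_neg]
  simp only [← Matrix.mul_apply]
  have hterm2 : ∑ l : Fin β, (if (i : ℕ) ≤ (l : ℕ) ∧ (l : ℕ) ≤ (j : ℕ) then
        (coefM c (F * Fᵀ) ((l : ℕ) - (i : ℕ)) * coefM c (F * Fᵀ) ((j : ℕ) - (l : ℕ))) a b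
      else 0)
      = (if (j : ℕ) = (i : ℕ) then (1 : Matrix (Fin m₂) (Fin m₂) ℂ)
          else if (j : ℕ) = (i : ℕ) + c then -(F * Fᵀ) else 0) a b := by
    simp only [ite_and_entry]
    rw [← Matrix.sum_apply, conv_fin c hc (F * Fᵀ) i j]
  rw [hterm2]
  simp only [ite_apply_mat]
  by_cases hj0 : (j : ℕ) = (i : ℕ)
  · have hij : i = j := Fin.ext hj0.symm
    subst hij
    rw [if_pos hj0]
    rw [Finset.sum_eq_zero (fun l _ => by rw [if_neg]; rintro ⟨h1, h2⟩; omega), zero_add]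
    simp [Matrix.one_apply, Prod.ext_iff]
  · rw [if_neg hj0]
    by_cases hjc : (j : ℕ) = (i : ℕ) + c
    · rw [if_pos hjc]
      rw [sum_ite_of_unique (fun l => (l : ℕ) = (α - β) + (i : ℕ) + k
          ∧ (j : ℕ) = (l : ℕ) + k) _ ((α - β) + (i : ℕ) + k) (by omega) (fun l hl => hl.1)]
      rw [if_pos (show (α - β) + (i : ℕ) + k = (α - β) + (i : ℕ) + k
          ∧ (j : ℕ) = ((⟨(α - β) + (i : ℕ) + k, by omega⟩ : Fin α) : ℕ) + k from
          ⟨rfl, by simp only [Fin.val_mk]; omega⟩)]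
      rw [Matrix.one_apply, if_neg (show ¬ ((i, a) = (j, b)) from by
        rintro h; rw [Prod.mk.injEq] at h; exact hj0 (by rw [h.1]))]
      rw [Matrix.neg_apply]
      ring
    · rw [if_neg hjc]
      rw [Finset.sum_eq_zero (fun l _ => by rw [if_neg]; rintro ⟨h1, h2⟩; omega), zero_add]
      rw [Matrix.one_apply, if_neg (show ¬ ((i, a) = (j, b)) from by
        rintro h; rw [Prod.mk.injEq] at h; exact hj0 (by rw [h.1])), Matrix.zero_apply]

end Stmt15Aux

/-- The generator `G = [[Δ_{11}, Δ_{12}], [Δ_{21}, Δ_{22}]]` satisfies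
`𝓕·Gᵀ·𝓕·G = 1`, where `𝓕 = E_α(I_{m₁}) ⊕ E_β(I_{m₂})`. -/
theorem stmt15 (α β k m₁ m₂ : ℕ) (hαβ : β < α) (hβ : 1 ≤ β) (hk : k ≤ β - 1)
    (hm1 : 1 ≤ m₁) (hm2 : 1 ≤ m₂) (F : Matrix (Fin m₂) (Fin m₁) ℂ) :
    Matrix.fromBlocks (revE α m₁) 0 0 (revE β m₂) *
        (Matrix.fromBlocks (blkToeplitz α m₁ m₁ (genA α β k F)) (genΔ12 α β k F)
          (genΔ21 α β k F) (blkToeplitz β m₂ m₂ (genD α β k F)))ᵀ *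
        Matrix.fromBlocks (revE α m₁) 0 0 (revE β m₂) *
        Matrix.fromBlocks (blkToeplitz α m₁ m₁ (genA α β k F)) (genΔ12 α β k F)
          (genΔ21 α β k F) (blkToeplitz β m₂ m₂ (genD α β k F)) = 1 := by
  have hβα : β ≤ α := le_of_lt hαβ
  have hflip : Matrix.fromBlocks (revE α m₁) 0 0 (revE β m₂) *
      (Matrix.fromBlocks (blkToeplitz α m₁ m₁ (genA α β k F)) (genΔ12 α β k F)
        (genΔ21 α β k F) (blkToeplitz β m₂ m₂ (genD α β k F)))ᵀ *
      Matrix.fromBlocks (revE α m₁) 0 0 (revE β m₂)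
      = Matrix.fromBlocks (blkToeplitz α m₁ m₁ (genA α β k F)) (-(genΔ12 α β k F))
        (-(genΔ21 α β k F)) (blkToeplitz β m₂ m₂ (genD α β k F)) := by
    rw [Matrix.fromBlocks_transpose, Matrix.fromBlocks_multiply, Matrix.fromBlocks_multiply]
    simp only [Matrix.zero_mul, Matrix.mul_zero, add_zero, zero_add]
    rw [Stmt15Aux.flip_toeplitz (genA α β k F), Stmt15Aux.flip_toeplitz (genD α β k F),
      Stmt15Aux.flip_d21 hβα F, Stmt15Aux.flip_d12 hβα F]
    simp only [Stmt15Aux.genA_transpose, Stmt15Aux.genD_transpose]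
  rw [hflip, Matrix.fromBlocks_multiply, Stmt15Aux.blockE1 hαβ F, Stmt15Aux.blockE2 hαβ F,
    Stmt15Aux.blockE3 hαβ F, Stmt15Aux.blockE4 hαβ F, Matrix.fromBlocks_one]
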